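/- Let f : ℝ^d → ℝ be μ-strongly convex and β-smooth. Then for any x, y, z ∈ ℝ^d, ⟨∇f(x), z − y⟩ ≥ f(z) − f(y) + (μ/4)‖y − z‖² − β‖z − x‖². -/
import Mathlib


open scoped RealInnerProductSpace

/-- Perturbed strong convexity (SCAFFOLD Lemma 5): if `f` is `μ`-strongly convex and
`β`-smooth, then for all `x, y, z`,
`⟨∇f(x), z - y⟩ ≥ f z - f y + (μ/4) ‖y - z‖² - β ‖z - x‖²`. -/
theorem stmt_10 (d : ℕ) (f : EuclideanSpace ℝ (Fin d) → ℝ) (μ β : ℝ)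
    (hμ : 0 < μ) (hβ : 0 < β)
    (hdiff : Differentiable ℝ f)
    (hsc : ∀ x y, f y ≥ f x + ⟪gradient f x, y - x⟫ + (μ / 2) * ‖y - x‖ ^ 2)
    (hsm : ∀ x y, f y ≤ f x + ⟪gradient f x, y - x⟫ + (β / 2) * ‖y - x‖ ^ 2) :
    ∀ x y z : EuclideanSpace ℝ (Fin d),
      ⟪gradient f x, z - y⟫ ≥ f z - f y + (μ / 4) * ‖y - z‖ ^ 2 - β * ‖z - x‖ ^ 2 := by
  intro x y z
  have h1 := hsm x z
  have h2 := hsc x y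
  have hμβ : (μ/2) * ‖z - x‖^2 ≤ (β/2) * ‖z - x‖^2 := by
    have ha := hsc x z; have hb := hsm x z; linarith
  have hsplit : ⟪gradient f x, z - y⟫ = ⟪gradient f x, z - x⟫ + ⟪gradient f x, x - y⟫ := by
    rw [← inner_add_right]; congr 1; abel
  have hinner : ⟪gradient f x, x - y⟫ = -⟪gradient f x, y - x⟫ := by
    rw [← inner_neg_right]; congr 1; abel
  have htri : ‖y - z‖ ≤ ‖y - x‖ + ‖x - z‖ := norm_sub_le_norm_sub_add_norm_sub y x z
  have hxz : ‖x - z‖ = ‖z - x‖ := norm_sub_rev x z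
  have hsq : ‖y - z‖^2 ≤ 2*‖y - x‖^2 + 2*‖x - z‖^2 := by
    nlinarith [norm_nonneg (y - z), norm_nonneg (y - x), norm_nonneg (x - z),
      sq_nonneg (‖y - x‖ - ‖x - z‖)]
  have hsq' : μ * ‖y - z‖^2 ≤ μ * (2*‖y - x‖^2 + 2*‖x - z‖^2) :=
    mul_le_mul_of_nonneg_left hsq hμ.le
  rw [hxz] at hsq'
  linarith
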